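/- arXiv:2104.07550 — 6 statements merged into one kernel-verified Lean document; each statement's English description precedes it below -/
import Mathlib

section
/- If the underlying linearly ordered residuated lattice L has no zero divisors with respect to ⊗, then (L*, ⊗_D, 1) is a commutative monoid. -/
/-- A linearly ordered (bounded, integral-scale) residuated lattice:
`⊥` plays the role of `0` and `⊤` the role of `1`. -/
class LinResLat (L : Type*) extends LinearOrder L, BoundedOrder L where
  mul : L → L → L
  imp : L → L → L
  mul_comm : ∀ a b : L, mul a b = mul b a
  mul_assoc : ∀ a b c : L, mul (mul a b) c = mul a (mul b c)
  mul_one : ∀ a : L, mul a ⊤ = a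
  adjoint : ∀ a b c : L, mul a b ≤ c ↔ a ≤ imp b c
  bot_lt_top : (⊥ : L) < ⊤

/-- The Dragonfly carrier `L* = L ∪ {*}`. -/
inductive Dstar (L : Type*) where
  | of : L → Dstar L
  | star : Dstar L

namespace Dstar

variable {L : Type*} [LinResLat L]

/-- Dragonfly multiplication `⊗_D`. -/
def dmul : Dstar L → Dstar L → Dstar L
  | of a, of b => of (LinResLat.mul a b)
  | of a, star => if a = ⊥ then of ⊥ else star
  | star, of b => if b = ⊥ then of ⊥ else star
  | star, star => star

/-- Dragonfly meet `∧_D`. -/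
def dmeet : Dstar L → Dstar L → Dstar L
  | of a, of b => of (a ⊓ b)
  | of a, star => if a = ⊥ then of ⊥ else star
  | star, of b => if b = ⊥ then of ⊥ else star
  | star, star => star

/-- Dragonfly join `∨_D`. -/
def djoin : Dstar L → Dstar L → Dstar L
  | of a, of b => of (a ⊔ b)
  | of a, star => if a = ⊥ then star else of a
  | star, of b => if b = ⊥ then star else of b
  | star, star => star

/-- Dragonfly residuum `→_D`. -/
def dimp : Dstar L → Dstar L → Dstar L
  | of a, of b => of (LinResLat.imp a b)
  | of a, star => if a = ⊥ then of ⊤ else star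
  | star, of b => if b = ⊥ then star else of b
  | star, star => of ⊤

/-- Embedding of `L*` into `Lex (L × Bool)` realizing the linear order `≤_ℓ`
which extends the order of `L` with `0 <_ℓ * <_ℓ α` for all `α ∈ L \ {0}`. -/
def emb : Dstar L → Lex (L × Bool)
  | of a => toLex (a, false)
  | star => toLex ((⊥ : L), true)

theorem emb_injective : Function.Injective (emb (L := L)) := by
  intro x y h
  cases x <;> cases y <;>
    simp only [emb, toLex_inj, Prod.mk.injEq] at h <;> simp_all

/-- The linear order `≤_ℓ` on the Dragonfly algebra. -/
instance : LinearOrder (Dstar L) := LinearOrder.lift' emb emb_injective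

theorem le_def (x y : Dstar L) : x ≤ y ↔ emb x ≤ emb y := Iff.rfl

instance : OrderBot (Dstar L) where
  bot := of ⊥
  bot_le x := by
    cases x with
    | of a => rw [le_def]; simp only [emb, Prod.Lex.le_iff]; exact bot_le.lt_or_eq.imp id (by simp_all)
    | star => rw [le_def]; simp [emb, Prod.Lex.le_iff]
instance : OrderTop (Dstar L) where
  top := of ⊤
  le_top x := by
    cases x with
    | of a => rw [le_def]; simp only [emb, Prod.Lex.le_iff]; exact le_top.lt_or_eq.imp id (by simp_all)
    | star => rw [le_def]; simp only [emb, Prod.Lex.le_iff]; exact Or.inl LinResLat.bot_lt_top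

theorem bot_eq : (⊥ : Dstar L) = of ⊥ := rfl
theorem top_eq : (⊤ : Dstar L) = of ⊤ := rfl

variable {ι : Type*} [Fintype ι] [DecidableEq ι]

/-- The multiplication-based qualitative (DPR) integral on the Dragonfly algebra:
`∫^{⊗_D}_{DPR,μ} f = ⋁_{A ⊆ C} (μ(A) ⊗_D ⋀_{i ∈ A} f_i)`. -/
def integMul (μ : Finset ι → Dstar L) (f : ι → Dstar L) : Dstar L :=
  Finset.univ.powerset.sup fun A => dmul (μ A) (A.inf f)

/-- The conjugate capacity `μ^c(A) = μ(C \ A) →_D 0`. -/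
def conj (μ : Finset ι → Dstar L) (A : Finset ι) : Dstar L :=
  dimp (μ Aᶜ) (of ⊥)

/-- The residuum-based qualitative (DPR) integral on the Dragonfly algebra:
`∫^{→_D}_{DPR,μ} f = ⋀_{A ⊆ C} (μ^c(A) →_D ⋁_{i ∈ A} f_i)`. -/
def integImp (μ : Finset ι → Dstar L) (f : ι → Dstar L) : Dstar L :=
  Finset.univ.powerset.inf fun A => dimp (conj μ A) (A.sup f)

end Dstar

open Dstar in
/-- If the underlying residuated lattice has no zero divisors wrt `⊗`,
then `(L*, ⊗_D, 1)` is a commutative monoid. -/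
theorem dmul_comm_monoid_of_no_zero_divisors {L : Type*} [LinResLat L]
    (hnzd : ∀ a b : L, LinResLat.mul a b = ⊥ → a = ⊥ ∨ b = ⊥) :
    (∀ x y : Dstar L, dmul x y = dmul y x) ∧
    (∀ x y z : Dstar L, dmul (dmul x y) z = dmul x (dmul y z)) ∧
    (∀ x : Dstar L, dmul x (Dstar.of ⊤) = x) ∧
    (∀ x : Dstar L, dmul (Dstar.of ⊤) x = x) := by
  have hbot : ∀ a : L, LinResLat.mul a ⊥ = ⊥ := by
    intro a
    have h : LinResLat.mul (⊥ : L) a ≤ ⊥ := (LinResLat.adjoint ⊥ a ⊥).mpr bot_le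
    rw [LinResLat.mul_comm]
    exact le_antisymm h bot_le
  have hbot' : ∀ a : L, LinResLat.mul ⊥ a = ⊥ := fun a => by
    rw [LinResLat.mul_comm]; exact hbot a
  have htop : (⊤ : L) ≠ ⊥ := fun h => absurd (h ▸ LinResLat.bot_lt_top) (lt_irrefl _)
  refine ⟨?_, ?_, ?_, ?_⟩
  · intro x y
    cases x <;> cases y <;> simp [dmul, LinResLat.mul_comm]
  · have key : ∀ a b : L, (if LinResLat.mul a b = ⊥ then of (⊥:L) else Dstar.star) =
        (if a = ⊥ then of (⊥:L) else if b = ⊥ then of (⊥:L) else Dstar.star) := by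
      intro a b
      rcases eq_or_ne (LinResLat.mul a b) ⊥ with h | h
      · rcases hnzd a b h with rfl | rfl <;> simp [h, hbot, hbot']
      · have ha : a ≠ ⊥ := fun e => h (by simp [e, hbot'])
        have hb : b ≠ ⊥ := fun e => h (by simp [e, hbot])
        simp [h, ha, hb]
    intro x y z
    rcases x with a | _ <;> rcases y with b | _ <;> rcases z with c | _
    · simp [dmul, LinResLat.mul_assoc]
    · show (if LinResLat.mul a b = ⊥ then of (⊥:L) else Dstar.star) = _
      rw [key]
      by_cases ha : a = ⊥ <;> by_cases hb : b = ⊥ <;>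
        simp [dmul, hbot, hbot', ha, hb]
    · by_cases ha : a = ⊥ <;> by_cases hc : c = ⊥ <;>
        simp [dmul, hbot, hbot', ha, hc]
    · by_cases ha : a = ⊥ <;> simp [dmul, hbot, hbot', ha]
    · show _ = (if LinResLat.mul b c = ⊥ then of (⊥:L) else Dstar.star)
      rw [key]
      by_cases hb : b = ⊥ <;> by_cases hc : c = ⊥ <;>
        simp [dmul, hbot, hbot', hb, hc]
    · by_cases hb : b = ⊥ <;> simp [dmul, hbot, hbot', hb]
    · by_cases hc : c = ⊥ <;> simp [dmul, hbot, hbot', hc]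
    · rfl
  · intro x
    cases x <;> simp [dmul, LinResLat.mul_one, htop]
  · intro x
    cases x <;> simp [dmul, LinResLat.mul_one, LinResLat.mul_comm ⊤, htop]
end

section
/- In the Dragonfly algebra L*, the multiplication ⊗_D is monotonically increasing in both arguments with respect to the linear order ≤_ℓ: if β ≤_ℓ γ then α ⊗_D β ≤_ℓ α ⊗_D γ for all α, β, γ ∈ L*. -/
section Aux
variable {L : Type*} [LinResLat L]

theorem Dstar.of_le_of {a b : L} : (Dstar.of a : Dstar L) ≤ Dstar.of b ↔ a ≤ b := by
  rw [Dstar.le_def]; simp only [Dstar.emb, Prod.Lex.le_iff]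
  constructor
  · rintro (h | ⟨h, -⟩); exact h.le; exact h.le
  · intro h; rcases h.lt_or_eq with h | h
    · exact Or.inl h
    · exact Or.inr ⟨h, le_refl _⟩

theorem Dstar.star_le_of {b : L} : (Dstar.star : Dstar L) ≤ Dstar.of b ↔ ⊥ < b := by
  rw [Dstar.le_def]; simp [Dstar.emb, Prod.Lex.le_iff]

theorem Dstar.of_le_star {a : L} : (Dstar.of a : Dstar L) ≤ Dstar.star ↔ a = ⊥ := by
  rw [Dstar.le_def]; simp only [Dstar.emb, Prod.Lex.le_iff]
  constructor
  · rintro (h | ⟨h, -⟩)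
    · exact absurd h (not_lt_bot)
    · exact h
  · intro h; exact Or.inr ⟨h, by simp⟩

theorem lrl_mul_bot (a : L) : LinResLat.mul a (⊥ : L) = ⊥ :=
  le_antisymm (by rw [LinResLat.mul_comm, LinResLat.adjoint]; exact bot_le) bot_le

theorem lrl_mul_mono {a b c : L} (h : b ≤ c) :
    LinResLat.mul a b ≤ LinResLat.mul a c := by
  rw [LinResLat.mul_comm, LinResLat.adjoint]
  refine h.trans ?_
  rw [← LinResLat.adjoint, LinResLat.mul_comm]

end Aux

open Dstar in
/-- The multiplication `⊗_D` is monotone in both arguments wrt `≤_ℓ`: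
if `β ≤_ℓ γ` then `α ⊗_D β ≤_ℓ α ⊗_D γ` (and symmetrically by commutativity). -/
theorem dmul_monotone {L : Type*} [LinResLat L]
    (hnzd : ∀ a b : L, LinResLat.mul a b = ⊥ → a = ⊥ ∨ b = ⊥)
    (x y z : Dstar L) (hyz : y ≤ z) :
    dmul x y ≤ dmul x z := by
  cases x with
  | star =>
    cases y with
    | star =>
      cases z with
      | star => exact le_refl _
      | of c =>
        have hc : ⊥ < c := Dstar.star_le_of.mp hyz
        simp only [dmul, if_neg hc.ne']
        exact le_refl _
    | of b =>
      cases z with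
      | star =>
        have hb : b = ⊥ := Dstar.of_le_star.mp hyz
        simp only [dmul, if_pos hb]
        exact bot_le (a := Dstar.star)
      | of c =>
        have hbc : b ≤ c := Dstar.of_le_of.mp hyz
        by_cases hb : b = ⊥
        · simp only [dmul, if_pos hb]
          exact bot_le (a := dmul Dstar.star (Dstar.of c))
        · have hc : c ≠ ⊥ := fun h => hb (le_antisymm (h ▸ hbc) bot_le)
          simp only [dmul, if_neg hb, if_neg hc]
          exact le_refl _
  | of a =>
    cases y with
    | star =>
      cases z with
      | star => exact le_refl _
      | of c =>
        have hc : ⊥ < c := Dstar.star_le_of.mp hyz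
        by_cases ha : a = ⊥
        · simp only [dmul, if_pos ha]
          exact bot_le (a := Dstar.of (LinResLat.mul a c))
        · simp only [dmul, if_neg ha]
          rw [Dstar.star_le_of]
          rcases (bot_le (a := LinResLat.mul a c)).lt_or_eq with h | h
          · exact h
          · rcases hnzd a c h.symm with h1 | h1
            · exact absurd h1 ha
            · exact absurd h1 hc.ne'
    | of b =>
      cases z with
      | star =>
        have hb : b = ⊥ := Dstar.of_le_star.mp hyz
        subst hb
        simp only [dmul, lrl_mul_bot]
        exact bot_le (a := if a = ⊥ then Dstar.of ⊥ else Dstar.star)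
      | of c =>
        exact Dstar.of_le_of.mpr (lrl_mul_mono (Dstar.of_le_of.mp hyz))
end

section
/- The Dragonfly algebra does not satisfy the adjointness property with respect to ≤_ℓ: there exists β ∈ L* with * <_ℓ β <_ℓ 1 such that * ⊗_D 1 ≤_ℓ β but 1 ≰_ℓ * →_D β; also * ⊗_D * ≰_ℓ 0 while * ≤_ℓ * →_D 0. -/
namespace Dstar

variable {L : Type*} [LinResLat L]

theorem of_le_of_s10 {a b : L} : of a ≤ of b ↔ a ≤ b := by
  rw [le_def, emb, emb, Prod.Lex.toLex_le_toLex]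
  simp [le_iff_lt_or_eq]

theorem of_lt_of {a b : L} : of a < of b ↔ a < b := by
  simp only [lt_iff_not_ge, of_le_of_s10]

theorem star_lt_of {a : L} : star < of a ↔ ⊥ < a := by
  rw [← not_le, le_def, emb, emb, Prod.Lex.toLex_le_toLex]
  simp [bot_lt_iff_ne_bot]

theorem of_bot_lt_star : of (⊥ : L) < star := by
  rw [← not_le, le_def, emb, emb, Prod.Lex.toLex_le_toLex]
  simp

theorem dmul_star_of {b : L} (hb : b ≠ ⊥) : dmul star (of b) = star := by
  simp [dmul, hb]

theorem dimp_star_of {b : L} (hb : b ≠ ⊥) : dimp star (of b) = of b := by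
  simp [dimp, hb]

theorem dmul_star_star : dmul (star : Dstar L) star = star := rfl

theorem dimp_star_bot : dimp star (of (⊥ : L)) = star := by
  simp [dimp]

end Dstar

open Dstar in
/-- The Dragonfly algebra does not satisfy the adjointness property wrt `≤_ℓ`:
there is `β` with `* <_ℓ β <_ℓ 1` such that `* ⊗_D 1 ≤_ℓ β` but
`1 ≰_ℓ * →_D β`; also `* ⊗_D * ≰_ℓ 0` while `* ≤_ℓ * →_D 0`. -/
theorem no_adjointness {L : Type*} [LinResLat L]
    (hβ : ∃ b : L, ⊥ < b ∧ b < ⊤) :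
    (∃ β : Dstar L, Dstar.star < β ∧ β < Dstar.of ⊤ ∧
      dmul Dstar.star (Dstar.of ⊤) ≤ β ∧
      ¬ (Dstar.of (⊤ : L) ≤ dimp Dstar.star β)) ∧
    ¬ (dmul (Dstar.star : Dstar L) Dstar.star ≤ Dstar.of ⊥) ∧
    (Dstar.star : Dstar L) ≤ dimp Dstar.star (Dstar.of ⊥) := by
  obtain ⟨b, hb_pos, hb_lt_top⟩ := hβ
  refine ⟨⟨of b, star_lt_of.2 hb_pos, of_lt_of.2 hb_lt_top, ?_, ?_⟩, ?_, ?_⟩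
  · rw [dmul_star_of LinResLat.bot_lt_top.ne']
    exact (star_lt_of.2 hb_pos).le
  · rw [dimp_star_of hb_pos.ne', not_le]
    exact of_lt_of.2 hb_lt_top
  · rw [dmul_star_star, not_le]
    exact of_bot_lt_star
  · rw [dimp_star_bot]
end

section
/- The residuum-based Dragonfly integral can fail to be monotone when the capacity takes unknown values: with C = {1,2}, μ(∅)=0, μ({1})=μ({2})=*, μ(C)=1, f = (*, 1), g = (α, 1) for any α with * <_ℓ α <_ℓ 1, we have f ≤_ℓ g pointwise but ∫^{→_D}_{DPR,μ} f = 1 >_ℓ α = ∫^{→_D}_{DPR,μ} g. -/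
section Aux
variable {L : Type*} [LinResLat L]

lemma myImp_top_bot : LinResLat.imp (⊤ : L) ⊥ = ⊥ := by
  have h := (LinResLat.adjoint (LinResLat.imp (⊤ : L) ⊥) ⊤ ⊥).mpr le_rfl
  rw [LinResLat.mul_one] at h
  exact le_antisymm h bot_le

lemma myImp_bot_bot : LinResLat.imp (⊥ : L) ⊥ = ⊤ :=
  le_antisymm le_top ((LinResLat.adjoint ⊤ ⊥ ⊥).mp
    (by rw [LinResLat.mul_comm, LinResLat.mul_one]))

lemma myImp_top_top : LinResLat.imp (⊤ : L) ⊤ = ⊤ :=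
  le_antisymm le_top ((LinResLat.adjoint ⊤ ⊤ ⊤).mp le_top)

lemma myOf_le_of {a b : L} (h : a ≤ b) : Dstar.of a ≤ Dstar.of b := by
  rw [Dstar.le_def]
  simp only [Dstar.emb, Prod.Lex.le_iff]
  rcases h.lt_or_eq with h | h
  · exact Or.inl h
  · exact Or.inr (by simp [h])

lemma myOf_lt_of {a b : L} (h : a < b) : Dstar.of a < Dstar.of b :=
  lt_of_le_of_ne (myOf_le_of h.le) (by intro he; cases he; exact lt_irrefl _ h)

lemma myStar_le_of {b : L} (h : ⊥ < b) : Dstar.star ≤ Dstar.of b := by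
  rw [Dstar.le_def]
  simp only [Dstar.emb, Prod.Lex.le_iff]
  exact Or.inl h

end Aux

open Dstar in
/-- The residuum-based Dragonfly integral can fail to be monotone when the
capacity takes unknown values: with `C = {1,2}`, `μ(∅)=0`, `μ({1})=μ({2})=*`,
`μ(C)=1`, `f = (*, 1)` and `g = (α, 1)` for `* <_ℓ α <_ℓ 1`, we have
`f ≤_ℓ g` pointwise but `∫^{→_D} f = 1 >_ℓ α = ∫^{→_D} g`. -/
theorem integImp_not_monotone {L : Type*} [LinResLat L]
    (hnzd : ∀ a b : L, LinResLat.mul a b = ⊥ → a = ⊥ ∨ b = ⊥)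
    (a : L) (ha0 : ⊥ < a) (ha1 : a < ⊤) :
    let μ : Finset (Fin 2) → Dstar L := fun A =>
      if A = ∅ then Dstar.of ⊥ else if A = Finset.univ then Dstar.of ⊤ else Dstar.star
    let f : Fin 2 → Dstar L := fun i => if i = 0 then Dstar.star else Dstar.of ⊤
    let g : Fin 2 → Dstar L := fun i => if i = 0 then Dstar.of a else Dstar.of ⊤
    (∀ i, f i ≤ g i) ∧
    integImp μ f = Dstar.of ⊤ ∧ integImp μ g = Dstar.of a ∧
    integImp μ g < integImp μ f := by
  intro μ f g
  have hne : a ≠ ⊥ := ne_of_gt ha0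
  have hP : (Finset.univ : Finset (Fin 2)).powerset =
      {∅, {0}, {1}, Finset.univ} := by decide
  have hc0 : ({0} : Finset (Fin 2))ᶜ = {1} := by decide
  have hc1 : ({1} : Finset (Fin 2))ᶜ = {0} := by decide
  have hce : (∅ : Finset (Fin 2))ᶜ = Finset.univ := by decide
  have hcu : (Finset.univ : Finset (Fin 2))ᶜ = ∅ := by decide
  have hμe : μ ∅ = Dstar.of ⊥ := by simp [μ]
  have hμu : μ Finset.univ = Dstar.of ⊤ := by
    simp only [μ]
    split_ifs with h1 h2 <;> first | rfl | exact absurd h1 (by decide) | exact absurd rfl h2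
  have hμ0 : μ {0} = Dstar.star := by
    simp only [μ]
    split_ifs with h1 h2 <;> first | rfl | exact absurd h1 (by decide) | exact absurd h2 (by decide)
  have hμ1 : μ {1} = Dstar.star := by
    simp only [μ]
    split_ifs with h1 h2 <;> first | rfl | exact absurd h1 (by decide) | exact absurd h2 (by decide)
  have hce' : conj μ ∅ = Dstar.of ⊥ := by
    rw [conj, hce, hμu]; simp [Dstar.dimp, myImp_top_bot]
  have hc0' : conj μ {0} = Dstar.star := by
    rw [conj, hc0, hμ1]; simp [Dstar.dimp]
  have hc1' : conj μ {1} = Dstar.star := by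
    rw [conj, hc1, hμ0]; simp [Dstar.dimp]
  have hcu' : conj μ Finset.univ = Dstar.of ⊤ := by
    rw [conj, hcu, hμe]; simp [Dstar.dimp, myImp_bot_bot]
  have hf0 : f 0 = Dstar.star := rfl
  have hf1 : f 1 = Dstar.of ⊤ := rfl
  have hg0 : g 0 = Dstar.of a := rfl
  have hg1 : g 1 = Dstar.of ⊤ := rfl
  have htne : (⊤ : L) ≠ ⊥ := ne_of_gt (lt_trans ha0 ha1)
  have hle : Dstar.of a ≤ Dstar.of ⊤ := myOf_le_of ha1.le
  have hsplit : ({∅, {0}, {1}, Finset.univ} : Finset (Finset (Fin 2))) =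
      insert ∅ (insert {0} (insert {1} {Finset.univ})) := rfl
  have hF : integImp μ f = Dstar.of ⊤ := by
    rw [integImp, hP, hsplit, Finset.inf_insert, Finset.inf_insert,
      Finset.inf_insert, Finset.inf_singleton]
    have h1 : Dstar.dimp (conj μ ∅) ((∅ : Finset (Fin 2)).sup f) = Dstar.of ⊤ := by
      rw [hce', Finset.sup_empty, Dstar.bot_eq]
      simp [Dstar.dimp, myImp_bot_bot]
    have h2 : Dstar.dimp (conj μ {0}) (({0} : Finset (Fin 2)).sup f) = Dstar.of ⊤ := by
      rw [hc0', Finset.sup_singleton, hf0]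
      simp [Dstar.dimp]
    have h3 : Dstar.dimp (conj μ {1}) (({1} : Finset (Fin 2)).sup f) = Dstar.of ⊤ := by
      rw [hc1', Finset.sup_singleton, hf1]
      simp [Dstar.dimp, htne]
    have h4 : Dstar.dimp (conj μ Finset.univ) ((Finset.univ : Finset (Fin 2)).sup f)
        = Dstar.of ⊤ := by
      have hsup : (Finset.univ : Finset (Fin 2)).sup f = Dstar.of ⊤ := by
        apply le_antisymm
        · exact Finset.sup_le fun i _ => by
            fin_cases i
            · exact le_trans (myStar_le_of ha0) hle
            · exact le_refl _
        · exact Finset.le_sup (f := f) (Finset.mem_univ 1)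
      rw [hcu', hsup]; simp [Dstar.dimp, myImp_top_top]
    rw [h1, h2, h3, h4, inf_idem, inf_idem, inf_idem]
  have hG : integImp μ g = Dstar.of a := by
    rw [integImp, hP, hsplit, Finset.inf_insert, Finset.inf_insert,
      Finset.inf_insert, Finset.inf_singleton]
    have h1 : Dstar.dimp (conj μ ∅) ((∅ : Finset (Fin 2)).sup g) = Dstar.of ⊤ := by
      rw [hce', Finset.sup_empty, Dstar.bot_eq]
      simp [Dstar.dimp, myImp_bot_bot]
    have h2 : Dstar.dimp (conj μ {0}) (({0} : Finset (Fin 2)).sup g) = Dstar.of a := by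
      rw [hc0', Finset.sup_singleton, hg0]
      simp [Dstar.dimp, hne]
    have h3 : Dstar.dimp (conj μ {1}) (({1} : Finset (Fin 2)).sup g) = Dstar.of ⊤ := by
      rw [hc1', Finset.sup_singleton, hg1]
      simp [Dstar.dimp, htne]
    have h4 : Dstar.dimp (conj μ Finset.univ) ((Finset.univ : Finset (Fin 2)).sup g)
        = Dstar.of ⊤ := by
      have hsup : (Finset.univ : Finset (Fin 2)).sup g = Dstar.of ⊤ := by
        apply le_antisymm
        · exact Finset.sup_le fun i _ => by
            fin_cases i
            · exact hle
            · exact le_refl _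
        · exact Finset.le_sup (f := g) (Finset.mem_univ 1)
      rw [hcu', hsup]; simp [Dstar.dimp, myImp_top_top]
    rw [h1, h2, h3, h4, inf_idem, inf_eq_left.mpr hle, inf_eq_right.mpr hle]
  refine ⟨?_, hF, hG, ?_⟩
  · intro i
    fin_cases i
    · exact myStar_le_of ha0
    · exact le_refl _
  · rw [hF, hG]; exact myOf_lt_of ha1
end

section
/- The multiplication-based Dragonfly integral is zero exactly when the capacity of the support vanishes: ∫^{⊗_D}_{DPR,μ} f = 0 if and only if μ({i : f_i >_ℓ 0}) = 0. -/
section Aux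

variable {L : Type*} [LinResLat L]

private lemma aux_mul_bot (a : L) : LinResLat.mul ⊥ a = ⊥ :=
  le_antisymm ((LinResLat.adjoint ⊥ a ⊥).mpr bot_le) bot_le

private lemma aux_dmul_bot_left (x : Dstar L) :
    Dstar.dmul (Dstar.of ⊥) x = Dstar.of ⊥ := by
  cases x <;> simp [Dstar.dmul, aux_mul_bot]

private lemma aux_dmul_bot_right (x : Dstar L) :
    Dstar.dmul x (Dstar.of ⊥) = Dstar.of ⊥ := by
  cases x with
  | of a => simp [Dstar.dmul, LinResLat.mul_comm a ⊥, aux_mul_bot]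
  | star => simp [Dstar.dmul]

end Aux

open Dstar in
/-- `∫^{⊗_D}_{DPR,μ} f = 0` if and only if `μ({i : f_i >_ℓ 0}) = 0`. -/
theorem integMul_eq_zero_iff {L ι : Type*} [LinResLat L]
    [Fintype ι] [DecidableEq ι] [Nonempty ι]
    (hnzd : ∀ a b : L, LinResLat.mul a b = ⊥ → a = ⊥ ∨ b = ⊥)
    (μ : Finset ι → Dstar L)
    (hμ0 : μ ∅ = Dstar.of ⊥) (hμ1 : μ Finset.univ = Dstar.of ⊤)
    (hmono : ∀ A B : Finset ι, A ⊆ B → μ A ≤ μ B)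
    (f : ι → Dstar L) :
    integMul μ f = Dstar.of ⊥ ↔
      μ (Finset.univ.filter fun i => Dstar.of ⊥ < f i) = Dstar.of ⊥ := by
  set S : Finset ι := Finset.univ.filter fun i => Dstar.of ⊥ < f i with hSdef
  have hbot : (⊥ : Dstar L) = Dstar.of ⊥ := rfl
  rw [integMul, ← hbot, Finset.sup_eq_bot_iff]
  constructor
  · intro h
    have key := h S (Finset.mem_powerset.mpr (Finset.subset_univ S))
    rcases eq_or_ne S ∅ with hSe | hSe
    · rw [hSe, hμ0, ← hbot]
    · obtain ⟨i, hi, hif⟩ := Finset.exists_mem_eq_inf S (Finset.nonempty_iff_ne_empty.mpr hSe) f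
      have hfi : f i ≠ ⊥ := by
        have := (Finset.mem_filter.mp hi).2
        exact fun hc => absurd (hc ▸ this) (lt_irrefl _)
      rw [hif] at key
      rcases hm : μ S with m | _
      · rcases hv : f i with v | _
        · rw [hm, hv] at key
          have hmv : LinResLat.mul m v = ⊥ := by
            simpa [Dstar.dmul, hbot, Dstar.of.injEq] using key
          rcases hnzd m v hmv with h1 | h2
          · rw [h1]; exact hbot.symm
          · exact absurd (by rw [hv, h2, hbot]) hfi
        · rw [hm, hv] at key
          by_cases hmb : m = ⊥
          · rw [hmb]; exact hbot.symm
          · simp [Dstar.dmul, hmb, hbot] at key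
      · rw [hm] at key
        rcases hv : f i with v | _
        · rw [hv] at key
          by_cases hvb : v = ⊥
          · exact absurd (by rw [hv, hvb, hbot]) hfi
          · simp [Dstar.dmul, hvb, hbot] at key
        · rw [hv] at key
          simp [Dstar.dmul, hbot] at key
  · intro h A _
    by_cases hAS : A ⊆ S
    · have hμA : μ A = ⊥ := le_bot_iff.mp (by rw [hbot, ← h] at *; exact hmono A S hAS)
      rw [hμA, hbot, aux_dmul_bot_left]
    · obtain ⟨i, hiA, hiS⟩ := Finset.not_subset.mp hAS
      have hfi : f i = ⊥ := by
        have : ¬ Dstar.of ⊥ < f i := fun hc =>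
          hiS (Finset.mem_filter.mpr ⟨Finset.mem_univ i, hc⟩)
        exact le_bot_iff.mp (hbot ▸ not_lt.mp this)
      have hinf : A.inf f = ⊥ := le_bot_iff.mp (hfi ▸ Finset.inf_le hiA)
      rw [hinf, hbot, aux_dmul_bot_right]
end

section
/- The multiplication-based Dragonfly integral returns a known nonzero value exactly when the capacity of the known-support is known and nonzero: ∫^{⊗_D}_{DPR,μ} f >_ℓ * if and only if μ({i : f_i >_ℓ *}) >_ℓ *. -/
/-! Without zero divisors, `x ⊗_D y >_ℓ *` holds exactly when both `x >_ℓ *` and `y >_ℓ *`, and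
`⋀_{i ∈ A} f_i >_ℓ *` exactly when `A` lies in the known support `S = {i : f_i >_ℓ *}`. So a term
of the integral exceeds `*` only if `A ⊆ S` and `μ(A) >_ℓ *`, and by monotonicity of `μ` the term
for `A = S` is then the witness. -/

namespace LinResLat

variable {L : Type*} [LinResLat L]

theorem bot_mul (a : L) : LinResLat.mul ⊥ a = ⊥ :=
  le_bot_iff.1 ((LinResLat.adjoint ⊥ a ⊥).2 bot_le)

theorem mul_bot (a : L) : LinResLat.mul a ⊥ = ⊥ := by
  rw [LinResLat.mul_comm, bot_mul]

theorem mul_eq_bot_iff (hnzd : ∀ a b : L, LinResLat.mul a b = ⊥ → a = ⊥ ∨ b = ⊥) {a b : L} :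
    LinResLat.mul a b = ⊥ ↔ a = ⊥ ∨ b = ⊥ :=
  ⟨hnzd a b, by rintro (rfl | rfl) <;> simp only [bot_mul, mul_bot]⟩

end LinResLat

namespace Dstar

variable {L : Type*} [LinResLat L]

theorem star_lt_of_iff {a : L} : star < of a ↔ a ≠ ⊥ := by
  change toLex ((⊥ : L), true) < toLex (a, false) ↔ _
  simp [Prod.Lex.toLex_lt_toLex, bot_lt_iff_ne_bot]

theorem star_lt_top : (star : Dstar L) < ⊤ :=
  star_lt_of_iff.2 LinResLat.bot_lt_top.ne'

theorem star_lt_inf_iff {ι : Type*} (A : Finset ι) (f : ι → Dstar L) :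
    star < A.inf f ↔ ∀ i ∈ A, star < f i :=
  Finset.lt_inf_iff star_lt_top

theorem star_lt_dmul_iff (hnzd : ∀ a b : L, LinResLat.mul a b = ⊥ → a = ⊥ ∨ b = ⊥)
    (x y : Dstar L) : star < dmul x y ↔ star < x ∧ star < y := by
  cases x <;> cases y <;> simp only [dmul] <;> try split_ifs
  all_goals simp [star_lt_of_iff, LinResLat.mul_eq_bot_iff hnzd, not_or]

end Dstar

open Dstar in
theorem integMul_gt_star_iff_general {L ι : Type*} [LinResLat L]
    [Fintype ι]
    (hnzd : ∀ a b : L, LinResLat.mul a b = ⊥ → a = ⊥ ∨ b = ⊥)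
    (μ : Finset ι → Dstar L)
    (hmono : ∀ A B : Finset ι, A ⊆ B → μ A ≤ μ B)
    (f : ι → Dstar L) :
    Dstar.star < integMul μ f ↔
      Dstar.star < μ (Finset.univ.filter fun i => Dstar.star < f i) := by
  simp only [integMul, Finset.lt_sup_iff, Finset.mem_powerset, Finset.subset_univ, true_and,
    star_lt_dmul_iff hnzd, star_lt_inf_iff]
  constructor
  · rintro ⟨A, hμA, hfA⟩
    exact hμA.trans_le (hmono _ _ fun i hi => Finset.mem_filter.2 ⟨Finset.mem_univ i, hfA i hi⟩)
  · exact fun h => ⟨_, h, fun i hi => (Finset.mem_filter.1 hi).2⟩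

open Dstar in
/-- `∫^{⊗_D}_{DPR,μ} f >_ℓ *` if and only if `μ({i : f_i >_ℓ *}) >_ℓ *`. -/
theorem integMul_gt_star_iff {L ι : Type*} [LinResLat L]
    [Fintype ι] [DecidableEq ι] [Nonempty ι]
    (hnzd : ∀ a b : L, LinResLat.mul a b = ⊥ → a = ⊥ ∨ b = ⊥)
    (μ : Finset ι → Dstar L)
    (hμ0 : μ ∅ = Dstar.of ⊥) (hμ1 : μ Finset.univ = Dstar.of ⊤)
    (hmono : ∀ A B : Finset ι, A ⊆ B → μ A ≤ μ B)
    (f : ι → Dstar L) :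
    Dstar.star < integMul μ f ↔
      Dstar.star < μ (Finset.univ.filter fun i => Dstar.star < f i) :=
  integMul_gt_star_iff_general hnzd μ hmono f
end
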